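/- arXiv:2302.01091 — 8 statements merged into one kernel-verified Lean document; each statement's English description precedes it below -/
import Mathlib

section
/- Let a, b be real numbers and let y, z be real numbers with 0 ≤ y < 1 and 0 ≤ z < 1. Then the double series rearrangement holds: ∑_{m=1}^∞ ∑_{n=1}^∞ y^m z^n/(m^a n^b) = ∑_{(j,k): j,k ≥ 1, gcd(j,k)=1} (1/(j^a k^b)) · ∑_{h=1}^∞ (y^j z^k)^h / h^{a+b}. -/
theorem stmt_3 (a b y z : ℝ) (hy0 : 0 ≤ y) (hy1 : y < 1) (hz0 : 0 ≤ z) (hz1 : z < 1) :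
    ∑' m : ℕ+, ∑' n : ℕ+, y ^ (m : ℕ) * z ^ (n : ℕ) / ((m : ℝ) ^ a * (n : ℝ) ^ b) =
      ∑' p : {p : ℕ+ × ℕ+ // Nat.gcd (p.1 : ℕ) (p.2 : ℕ) = 1},
        (1 / ((p.val.1 : ℝ) ^ a * (p.val.2 : ℝ) ^ b)) *
          ∑' h : ℕ+,
            (y ^ (p.val.1 : ℕ) * z ^ (p.val.2 : ℕ)) ^ (h : ℕ) / (h : ℝ) ^ (a + b) := by
  classical
  -- summability of each single-variable series
  have key : ∀ (c x : ℝ), 0 ≤ x → x < 1 →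
      Summable (fun m : ℕ+ => x ^ (m : ℕ) / (m : ℝ) ^ c) := by
    intro c x hx0 hx1
    have hsum : Summable (fun n : ℕ => (n : ℝ) ^ (⌈|c|⌉₊) * x ^ n) :=
      summable_pow_mul_geometric_of_norm_lt_one _
        (by rwa [Real.norm_eq_abs, abs_of_nonneg hx0])
    have hsub : Summable (fun m : ℕ+ => ((m : ℕ) : ℝ) ^ (⌈|c|⌉₊) * x ^ (m : ℕ)) :=
      hsum.comp_injective (fun m n h => PNat.coe_injective h)
    refine hsub.of_nonneg_of_le (fun m => by positivity) (fun m => ?_)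
    have hm1 : (1 : ℝ) ≤ (m : ℝ) := by exact_mod_cast m.one_le
    have hm0 : (0 : ℝ) < (m : ℝ) := lt_of_lt_of_le one_pos hm1
    have h1 : (m : ℝ) ^ (-c) ≤ ((m : ℕ) : ℝ) ^ (⌈|c|⌉₊) := by
      rw [← Real.rpow_natCast]
      exact Real.rpow_le_rpow_of_exponent_le hm1
        ((neg_le_abs c).trans (Nat.le_ceil _))
    calc x ^ (m : ℕ) / (m : ℝ) ^ c = (m : ℝ) ^ (-c) * x ^ (m : ℕ) := by
          rw [Real.rpow_neg hm0.le, div_eq_mul_inv, mul_comm]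
      _ ≤ ((m : ℕ) : ℝ) ^ (⌈|c|⌉₊) * x ^ (m : ℕ) := by
          apply mul_le_mul_of_nonneg_right h1 (by positivity)
  set f : ℕ+ × ℕ+ → ℝ :=
    fun p => y ^ (p.1 : ℕ) * z ^ (p.2 : ℕ) / ((p.1 : ℝ) ^ a * (p.2 : ℝ) ^ b) with hf_def
  have hf : Summable f := by
    have h := (key a y hy0 hy1).mul_of_nonneg (key b z hz0 hz1)
      (fun m => by positivity) (fun n => by positivity)
    exact h.congr fun p => div_mul_div_comm _ _ _ _
  -- the bijection
  let φ : {p : ℕ+ × ℕ+ // Nat.gcd (p.1 : ℕ) (p.2 : ℕ) = 1} × ℕ+ → ℕ+ × ℕ+ :=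
    fun x => (x.2 * x.1.val.1, x.2 * x.1.val.2)
  have hφ : Function.Bijective φ := by
    constructor
    · rintro ⟨⟨⟨j, k⟩, hjk⟩, h⟩ ⟨⟨⟨j', k'⟩, hjk'⟩, h'⟩ heq
      simp only [φ, Prod.mk.injEq] at heq
      obtain ⟨e1, e2⟩ := heq
      have e1' : (h : ℕ) * (j : ℕ) = (h' : ℕ) * (j' : ℕ) := by
        exact_mod_cast congrArg (fun t : ℕ+ => (t : ℕ)) e1
      have e2' : (h : ℕ) * (k : ℕ) = (h' : ℕ) * (k' : ℕ) := by
        exact_mod_cast congrArg (fun t : ℕ+ => (t : ℕ)) e2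
      have hh : (h : ℕ) = (h' : ℕ) := by
        calc (h : ℕ) = Nat.gcd ((h : ℕ) * j) ((h : ℕ) * k) := by
              rw [Nat.gcd_mul_left, hjk, mul_one]
          _ = Nat.gcd ((h' : ℕ) * j') ((h' : ℕ) * k') := by rw [e1', e2']
          _ = (h' : ℕ) := by rw [Nat.gcd_mul_left, hjk', mul_one]
      rw [hh] at e1' e2'
      have hj : (j : ℕ) = (j' : ℕ) := Nat.eq_of_mul_eq_mul_left h'.pos e1'
      have hk : (k : ℕ) = (k' : ℕ) := Nat.eq_of_mul_eq_mul_left h'.pos e2'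
      refine Prod.ext ?_ (PNat.coe_injective hh)
      exact Subtype.ext (Prod.ext (PNat.coe_injective hj) (PNat.coe_injective hk))
    · rintro ⟨m, n⟩
      have hg : 0 < Nat.gcd (m : ℕ) (n : ℕ) := Nat.gcd_pos_of_pos_left _ m.pos
      refine ⟨⟨⟨⟨⟨(m : ℕ) / Nat.gcd (m : ℕ) (n : ℕ),
          Nat.div_pos (Nat.le_of_dvd m.pos (Nat.gcd_dvd_left _ _)) hg⟩,
        ⟨(n : ℕ) / Nat.gcd (m : ℕ) (n : ℕ),
          Nat.div_pos (Nat.le_of_dvd n.pos (Nat.gcd_dvd_right _ _)) hg⟩⟩,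
        Nat.coprime_div_gcd_div_gcd hg⟩, ⟨Nat.gcd (m : ℕ) (n : ℕ), hg⟩⟩, ?_⟩
      refine Prod.ext (PNat.coe_injective ?_) (PNat.coe_injective ?_)
      · show Nat.gcd (m : ℕ) (n : ℕ) * ((m : ℕ) / Nat.gcd (m : ℕ) (n : ℕ)) = (m : ℕ)
        exact Nat.mul_div_cancel' (Nat.gcd_dvd_left _ _)
      · show Nat.gcd (m : ℕ) (n : ℕ) * ((n : ℕ) / Nat.gcd (m : ℕ) (n : ℕ)) = (n : ℕ)
        exact Nat.mul_div_cancel' (Nat.gcd_dvd_right _ _)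
  let e := Equiv.ofBijective φ hφ
  have hsum2 : Summable (fun x => f (φ x)) := (e.summable_iff (f := f)).mpr hf
  calc ∑' m : ℕ+, ∑' n : ℕ+, y ^ (m : ℕ) * z ^ (n : ℕ) / ((m : ℝ) ^ a * (n : ℝ) ^ b)
      = ∑' p : ℕ+ × ℕ+, f p := (Summable.tsum_prod' hf hf.prod_factor).symm
    _ = ∑' x, f (φ x) := (e.tsum_eq f).symm
    _ = ∑' p : {p : ℕ+ × ℕ+ // Nat.gcd (p.1 : ℕ) (p.2 : ℕ) = 1}, ∑' h : ℕ+, f (φ (p, h)) :=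
        Summable.tsum_prod' hsum2 hsum2.prod_factor
    _ = _ := by
        refine tsum_congr ?_
        rintro ⟨⟨j, k⟩, hjk⟩
        rw [← tsum_mul_left]
        refine tsum_congr fun h => ?_
        have hJ : (0 : ℝ) < (j : ℝ) := by exact_mod_cast j.pos
        have hK : (0 : ℝ) < (k : ℝ) := by exact_mod_cast k.pos
        have hH : (0 : ℝ) < (h : ℝ) := by exact_mod_cast h.pos
        show y ^ ((h * j : ℕ+) : ℕ) * z ^ ((h * k : ℕ+) : ℕ) /
            (((h * j : ℕ+) : ℝ) ^ a * ((h * k : ℕ+) : ℝ) ^ b) =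
          1 / ((j : ℝ) ^ a * (k : ℝ) ^ b) *
            ((y ^ (j : ℕ) * z ^ (k : ℕ)) ^ (h : ℕ) / (h : ℝ) ^ (a + b))
        have c1 : ((h * j : ℕ+) : ℝ) = (h : ℝ) * (j : ℝ) := by push_cast; ring
        have c2 : ((h * k : ℕ+) : ℝ) = (h : ℝ) * (k : ℝ) := by push_cast; ring
        have c3 : ((h * j : ℕ+) : ℕ) = (h : ℕ) * (j : ℕ) := PNat.mul_coe h j
        have c4 : ((h * k : ℕ+) : ℕ) = (h : ℕ) * (k : ℕ) := PNat.mul_coe h k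
        rw [c1, c2, c3, c4, Real.mul_rpow hH.le hJ.le, Real.mul_rpow hH.le hK.le,
          Real.rpow_add hH, mul_pow, pow_mul' y (h:ℕ) (j:ℕ), pow_mul' z (h:ℕ) (k:ℕ)]
        have n1 : (h : ℝ) ^ a ≠ 0 := ne_of_gt (Real.rpow_pos_of_pos hH a)
        have n2 : (h : ℝ) ^ b ≠ 0 := ne_of_gt (Real.rpow_pos_of_pos hH b)
        have n3 : (j : ℝ) ^ a ≠ 0 := ne_of_gt (Real.rpow_pos_of_pos hJ a)
        have n4 : (k : ℝ) ^ b ≠ 0 := ne_of_gt (Real.rpow_pos_of_pos hK b)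
        generalize (y ^ (j : ℕ)) ^ (h : ℕ) * (z ^ (k : ℕ)) ^ (h : ℕ) = A
        field_simp
end

section
/- Let a, b be real numbers with a + b = 1, and let y, z be real with 0 ≤ y < 1, 0 ≤ z < 1. Then ∑_{(j,k): j,k ≥ 1, gcd(j,k)=1} (1/(j^a k^b)) · log(1/(1 - y^j z^k)) = (∑_{j=1}^∞ y^j/j^a) · (∑_{k=1}^∞ z^k/k^b). -/
/-- Summability of the polylog-type series over `ℕ+`. -/
lemma vpv_summable (c y : ℝ) (hy0 : 0 ≤ y) (hy1 : y < 1) :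
    Summable (fun j : ℕ+ => y ^ (j : ℕ) / (j : ℝ) ^ c) := by
  have hnorm : ‖y‖ < 1 := by rwa [Real.norm_eq_abs, abs_of_nonneg hy0]
  set m := ⌈|c|⌉₊ with hm
  have hsum : Summable (fun n : ℕ => (n : ℝ) ^ m * y ^ n) :=
    summable_pow_mul_geometric_of_norm_lt_one m hnorm
  have hsum' : Summable (fun j : ℕ+ => ((j : ℕ) : ℝ) ^ m * y ^ (j : ℕ)) :=
    hsum.comp_injective (fun a b hab => PNat.coe_injective hab)
  refine Summable.of_nonneg_of_le (fun j => by positivity) (fun j => ?_) hsum'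
  have hj1 : (1 : ℝ) ≤ ((j : ℕ) : ℝ) := by exact_mod_cast j.one_le
  have hj0 : (0 : ℝ) ≤ ((j : ℕ) : ℝ) := by positivity
  have key : ((j : ℕ) : ℝ) ^ c⁻¹ = 0 ∨ True := Or.inr trivial
  have h1 : (((j : ℕ) : ℝ) ^ c)⁻¹ ≤ ((j : ℕ) : ℝ) ^ m := by
    rw [← Real.rpow_neg hj0, ← Real.rpow_natCast _ m]
    refine Real.rpow_le_rpow_of_exponent_le hj1 ?_
    calc -c ≤ |c| := neg_le_abs c
      _ ≤ (m : ℝ) := Nat.le_ceil _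
  calc y ^ (j : ℕ) / ((j : ℕ) : ℝ) ^ c = y ^ (j : ℕ) * (((j : ℕ) : ℝ) ^ c)⁻¹ := by
        rw [div_eq_mul_inv]
    _ ≤ y ^ (j : ℕ) * ((j : ℕ) : ℝ) ^ m := by
        apply mul_le_mul_of_nonneg_left h1 (by positivity)
    _ = ((j : ℕ) : ℝ) ^ m * y ^ (j : ℕ) := by ring

/-- The log series over `ℕ+`. -/
lemma vpv_log_hasSum (t : ℝ) (h0 : 0 ≤ t) (h1 : t < 1) :
    HasSum (fun n : ℕ+ => t ^ (n : ℕ) / ((n : ℕ) : ℝ)) (Real.log (1 / (1 - t))) := by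
  have habs : |t| < 1 := by rwa [abs_of_nonneg h0]
  have H := Real.hasSum_pow_div_log_of_abs_lt_one habs
  have hlog : Real.log (1 / (1 - t)) = -Real.log (1 - t) := by
    rw [one_div, Real.log_inv]
  rw [hlog]
  refine (Equiv.hasSum_iff (Equiv.pnatEquivNat.symm)).mp ?_
  have : (fun n : ℕ+ => t ^ (n : ℕ) / ((n : ℕ) : ℝ)) ∘ ⇑Equiv.pnatEquivNat.symm
      = fun n : ℕ => t ^ (n + 1) / ((n : ℝ) + 1) := by
    funext n
    simp [Function.comp, Equiv.pnatEquivNat]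
  rw [this]
  exact H

/-- The reindexing bijection: (coprime pair, multiplier) ↦ scaled pair. -/
noncomputable def vpvEquiv :
    ({p : ℕ+ × ℕ+ // Nat.gcd (p.1 : ℕ) (p.2 : ℕ) = 1} × ℕ+) ≃ (ℕ+ × ℕ+) := by
  refine Equiv.ofBijective (fun q => (q.2 * q.1.val.1, q.2 * q.1.val.2)) ⟨?_, ?_⟩
  · rintro ⟨⟨⟨j, k⟩, hjk⟩, n⟩ ⟨⟨⟨j', k'⟩, hjk'⟩, n'⟩ heq
    rw [Prod.ext_iff] at heq
    obtain ⟨e1, e2⟩ := heq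
    have e1' : (n : ℕ) * (j : ℕ) = (n' : ℕ) * (j' : ℕ) := by exact_mod_cast congrArg PNat.val e1
    have e2' : (n : ℕ) * (k : ℕ) = (n' : ℕ) * (k' : ℕ) := by exact_mod_cast congrArg PNat.val e2
    have g1 : Nat.gcd ((n : ℕ) * (j : ℕ)) ((n : ℕ) * (k : ℕ)) = (n : ℕ) := by
      rw [Nat.gcd_mul_left, hjk, mul_one]
    have g2 : Nat.gcd ((n' : ℕ) * (j' : ℕ)) ((n' : ℕ) * (k' : ℕ)) = (n' : ℕ) := by
      rw [Nat.gcd_mul_left, hjk', mul_one]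
    have hn : (n : ℕ) = (n' : ℕ) := by rw [← g1, e1', e2', g2]
    have hj : (j : ℕ) = (j' : ℕ) := by
      apply Nat.eq_of_mul_eq_mul_left n.pos
      rw [e1', hn]
    have hk : (k : ℕ) = (k' : ℕ) := by
      apply Nat.eq_of_mul_eq_mul_left n.pos
      rw [e2', hn]
    have : n = n' := PNat.coe_injective hn
    have hjj : j = j' := PNat.coe_injective hj
    have hkk : k = k' := PNat.coe_injective hk
    subst this; subst hjj; subst hkk
    rfl
  · rintro ⟨J, K⟩
    set d := Nat.gcd (J : ℕ) (K : ℕ) with hd_def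
    have hd : 0 < d := Nat.gcd_pos_of_pos_left _ J.pos
    have hJd : d ∣ (J : ℕ) := Nat.gcd_dvd_left _ _
    have hKd : d ∣ (K : ℕ) := Nat.gcd_dvd_right _ _
    have hjpos : 0 < (J : ℕ) / d := Nat.div_pos (Nat.le_of_dvd J.pos hJd) hd
    have hkpos : 0 < (K : ℕ) / d := Nat.div_pos (Nat.le_of_dvd K.pos hKd) hd
    refine ⟨⟨⟨⟨⟨(J : ℕ) / d, hjpos⟩, ⟨(K : ℕ) / d, hkpos⟩⟩, ?_⟩, ⟨d, hd⟩⟩, ?_⟩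
    · exact Nat.coprime_div_gcd_div_gcd hd
    · apply Prod.ext
      · apply PNat.coe_injective
        show d * ((J : ℕ) / d) = (J : ℕ)
        exact Nat.mul_div_cancel' hJd
      · apply PNat.coe_injective
        show d * ((K : ℕ) / d) = (K : ℕ)
        exact Nat.mul_div_cancel' hKd

theorem stmt_4 (a b y z : ℝ) (hab : a + b = 1) (hy0 : 0 ≤ y) (hy1 : y < 1)
    (hz0 : 0 ≤ z) (hz1 : z < 1) :
    ∑' p : {p : ℕ+ × ℕ+ // Nat.gcd (p.1 : ℕ) (p.2 : ℕ) = 1},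
        (1 / ((p.val.1 : ℝ) ^ a * (p.val.2 : ℝ) ^ b)) *
          Real.log (1 / (1 - y ^ (p.val.1 : ℕ) * z ^ (p.val.2 : ℕ))) =
      (∑' j : ℕ+, y ^ (j : ℕ) / (j : ℝ) ^ a) * (∑' k : ℕ+, z ^ (k : ℕ) / (k : ℝ) ^ b) := by
  set g : ℕ+ → ℝ := fun j => y ^ (j : ℕ) / (j : ℝ) ^ a with hg_def
  set h : ℕ+ → ℝ := fun k => z ^ (k : ℕ) / (k : ℝ) ^ b with hh_def
  have hg : Summable g := vpv_summable a y hy0 hy1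
  have hh : Summable h := vpv_summable b z hz0 hz1
  have hgnn : ∀ j, 0 ≤ g j := fun j => by positivity
  have hhnn : ∀ k, 0 ≤ h k := fun k => by positivity
  set F : ℕ+ × ℕ+ → ℝ := fun p => g p.1 * h p.2 with hF_def
  have hF : Summable F := Summable.mul_of_nonneg hg hh hgnn hhnn
  -- RHS as a double sum
  have hRHS : (∑' j : ℕ+, g j) * (∑' k : ℕ+, h k) = ∑' p : ℕ+ × ℕ+, F p := by
    apply tsum_mul_tsum_of_summable_norm
    · refine hg.congr fun j => ?_
      rw [Real.norm_eq_abs, abs_of_nonneg (hgnn j)]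
    · refine hh.congr fun k => ?_
      rw [Real.norm_eq_abs, abs_of_nonneg (hhnn k)]
  -- pull back along the equivalence
  have hFe : Summable (fun q => F (vpvEquiv q)) := ((vpvEquiv).summable_iff).mpr hF
  have hEq : ∑' p : ℕ+ × ℕ+, F p = ∑' q, F (vpvEquiv q) := (vpvEquiv.tsum_eq F).symm
  rw [hRHS, hEq, Summable.tsum_prod' hFe hFe.prod_factor]
  -- compare termwise over the coprime pairs
  apply tsum_congr
  rintro ⟨⟨j, k⟩, hjk⟩
  -- the inner sum over multipliers
  set t : ℝ := y ^ (j : ℕ) * z ^ (k : ℕ) with ht_def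
  have ht0 : 0 ≤ t := by positivity
  have ht1 : t < 1 := by
    have h1 : y ^ (j : ℕ) < 1 := pow_lt_one₀ hy0 hy1 j.pos.ne'
    have h2 : z ^ (k : ℕ) ≤ 1 := pow_le_one₀ hz0 (le_of_lt hz1)
    calc t ≤ y ^ (j : ℕ) * 1 := by
          apply mul_le_mul_of_nonneg_left h2 (by positivity)
      _ = y ^ (j : ℕ) := mul_one _
      _ < 1 := h1
  have hterm : ∀ n : ℕ+, F (vpvEquiv (⟨(j, k), hjk⟩, n))
      = (1 / ((j : ℝ) ^ a * (k : ℝ) ^ b)) * (t ^ (n : ℕ) / ((n : ℕ) : ℝ)) := by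
    intro n
    show g (n * j) * h (n * k) = _
    have hn0 : (0 : ℝ) < ((n : ℕ) : ℝ) := by exact_mod_cast n.pos
    have hj0 : (0 : ℝ) ≤ ((j : ℕ) : ℝ) := by positivity
    have hk0 : (0 : ℝ) ≤ ((k : ℕ) : ℝ) := by positivity
    have hja : (0 : ℝ) < ((j : ℕ) : ℝ) ^ a :=
      Real.rpow_pos_of_pos (by exact_mod_cast j.pos) a
    have hkb : (0 : ℝ) < ((k : ℕ) : ℝ) ^ b :=
      Real.rpow_pos_of_pos (by exact_mod_cast k.pos) b
    have hnab : ((n : ℕ) : ℝ) ^ a * ((n : ℕ) : ℝ) ^ b = ((n : ℕ) : ℝ) := by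
      rw [← Real.rpow_add hn0, hab, Real.rpow_one]
    have hcast1 : (((n * j : ℕ+) : ℕ) : ℝ) = ((n : ℕ) : ℝ) * ((j : ℕ) : ℝ) := by
      rw [PNat.mul_coe]; push_cast; ring
    have hcast2 : (((n * k : ℕ+) : ℕ) : ℝ) = ((n : ℕ) : ℝ) * ((k : ℕ) : ℝ) := by
      rw [PNat.mul_coe]; push_cast; ring
    have hy' : y ^ ((n * j : ℕ+) : ℕ) = (y ^ (j : ℕ)) ^ (n : ℕ) := by
      rw [PNat.mul_coe, pow_mul']
    have hz' : z ^ ((n * k : ℕ+) : ℕ) = (z ^ (k : ℕ)) ^ (n : ℕ) := by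
      rw [PNat.mul_coe, pow_mul']
    simp only [hg_def, hh_def]
    rw [hcast1, hcast2, hy', hz',
      Real.mul_rpow (le_of_lt hn0) hj0, Real.mul_rpow (le_of_lt hn0) hk0,
      ht_def, mul_pow, div_mul_div_comm, one_div_mul_eq_div, div_div]
    congr 1
    linear_combination (((j : ℕ) : ℝ) ^ a * ((k : ℕ) : ℝ) ^ b) * hnab
  rw [tsum_congr hterm, tsum_mul_left, (vpv_log_hasSum t ht0 ht1).tsum_eq]
end

section
/- For real y, z with 0 ≤ y < 1 and 0 ≤ z < 1: ∑_{(j,k): j,k ≥ 1, gcd(j,k)=1} (1/k) · log(1 - y^j z^k) = (y/(1-y)) · log(1 - z). Equivalently, ∏_{gcd(j,k)=1, j,k≥1} (1 - y^j z^k)^{1/k} = (1-z)^{y/(1-y)}. -/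
/-!
Every pair `(J, K)` of positive integers is uniquely `(j n, k n)` with `j, k` coprime and
`n = gcd (J, K)`. Regrouping the absolutely convergent double series
`∑_{J,K} y^J z^K / K = (y / (1 - y)) · (-log (1 - z))` along this decomposition, the fibre over a
coprime pair `(j, k)` is `(1/k) ∑_n (y^j z^k)^n / n = -(1/k) log (1 - y^j z^k)`.
Exponentiating gives the product form.
-/

open Real

namespace PNat

lemma coprime_mul_injective :
    Function.Injective
      (fun q : {p : ℕ+ × ℕ+ // Nat.Coprime p.1 p.2} × ℕ+ => (q.1.1.1 * q.2, q.1.1.2 * q.2)) := by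
  rintro ⟨⟨⟨j₁, k₁⟩, h₁⟩, n₁⟩ ⟨⟨⟨j₂, k₂⟩, h₂⟩, n₂⟩ h
  simp only [Prod.mk.injEq] at h
  obtain ⟨hj, hk⟩ := h
  have hgcd : ∀ {j k n : ℕ+}, Nat.Coprime j k → Nat.gcd (j * n : ℕ+) (k * n : ℕ+) = n := by
    intro j k n hjk
    rw [mul_coe, mul_coe, Nat.gcd_mul_right, hjk, one_mul]
  have hn : n₁ = n₂ := coe_injective <| by rw [← hgcd h₁, hj, hk, hgcd h₂]
  subst hn
  rw [mul_left_inj] at hj hk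
  subst hj hk
  rfl

lemma coprime_mul_surjective :
    Function.Surjective
      (fun q : {p : ℕ+ × ℕ+ // Nat.Coprime p.1 p.2} × ℕ+ => (q.1.1.1 * q.2, q.1.1.2 * q.2)) := by
  rintro ⟨J, K⟩
  obtain ⟨g, j, k, hg, hjk, hJ, hK⟩ := Nat.exists_coprime' (Nat.gcd_pos_of_pos_left K J.pos)
  have hj : 0 < j := Nat.pos_of_mul_pos_right (hJ ▸ J.pos)
  have hk : 0 < k := Nat.pos_of_mul_pos_right (hK ▸ K.pos)
  exact ⟨⟨⟨(⟨j, hj⟩, ⟨k, hk⟩), hjk⟩, ⟨g, hg⟩⟩, Prod.ext (eq hJ.symm) (eq hK.symm)⟩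

/-- The inverse sends `(J, K)` to `((J / gcd J K, K / gcd J K), gcd J K)`. -/
noncomputable def coprimeMulEquiv : {p : ℕ+ × ℕ+ // Nat.Coprime p.1 p.2} × ℕ+ ≃ ℕ+ × ℕ+ :=
  Equiv.ofBijective _ ⟨coprime_mul_injective, coprime_mul_surjective⟩

end PNat

section Series

variable {x y z : ℝ}

lemma hasSum_pnat_pow (hx : |x| < 1) : HasSum (fun n : ℕ+ => x ^ (n : ℕ)) (x / (1 - x)) := by
  rw [hasSum_pnat_iff_hasSum_succ (f := fun n => x ^ n)]
  simpa [pow_succ', div_eq_mul_inv] using (hasSum_geometric_of_abs_lt_one hx).mul_left x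

lemma hasSum_pnat_pow_div (hx : |x| < 1) :
    HasSum (fun n : ℕ+ => x ^ (n : ℕ) / n) (-log (1 - x)) := by
  rw [hasSum_pnat_iff_hasSum_succ (f := fun n => x ^ n / n)]
  simpa using hasSum_pow_div_log_of_abs_lt_one hx

lemma abs_pow_mul_pow_lt_one (hy : |y| ≤ 1) (hz : |z| < 1) (j : ℕ) {k : ℕ} (hk : k ≠ 0) :
    |y ^ j * z ^ k| < 1 := by
  rw [abs_mul, abs_pow, abs_pow]
  calc |y| ^ j * |z| ^ k ≤ 1 * |z| ^ k := by gcongr; exact pow_le_one₀ (abs_nonneg y) hy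
    _ < 1 := by rw [one_mul]; exact pow_lt_one₀ (abs_nonneg z) hz hk

lemma hasSum_pnat_prod_pow_mul_pow_div (hy : |y| < 1) (hz : |z| < 1) :
    HasSum (fun p : ℕ+ × ℕ+ => y ^ (p.1 : ℕ) * (z ^ (p.2 : ℕ) / p.2))
      (y / (1 - y) * -log (1 - z)) := by
  have hy' : |(|y|)| < 1 := by rwa [abs_abs]
  have hz' : |(|z|)| < 1 := by rwa [abs_abs]
  have hsy : Summable fun n : ℕ+ => ‖y ^ (n : ℕ)‖ := by
    refine (hasSum_pnat_pow hy').summable.congr fun n => ?_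
    rw [norm_pow, Real.norm_eq_abs]
  have hsz : Summable fun n : ℕ+ => ‖z ^ (n : ℕ) / n‖ := by
    refine (hasSum_pnat_pow_div hz').summable.congr fun n => ?_
    rw [norm_div, norm_pow, Real.norm_eq_abs, Real.norm_eq_abs, Nat.abs_cast]
  have hprod := summable_mul_of_summable_norm hsy hsz
  exact (hasSum_pnat_pow hy).mul (hasSum_pnat_pow_div hz) hprod

lemma hasSum_pnat_pow_mul_mul_pow_mul_div (hy : |y| < 1) (hz : |z| < 1) (j k : ℕ+) :
    HasSum (fun n : ℕ+ => y ^ ((j * n : ℕ+) : ℕ) * (z ^ ((k * n : ℕ+) : ℕ) / (k * n : ℕ+)))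
      (-log (1 - y ^ (j : ℕ) * z ^ (k : ℕ)) / k) := by
  refine ((hasSum_pnat_pow_div (abs_pow_mul_pow_lt_one hy.le hz j k.ne_zero)).div_const
    (k : ℝ)).congr_fun fun n => ?_
  push_cast
  rw [mul_pow, ← pow_mul, ← pow_mul]
  field_simp

theorem hasSum_coprime_inv_mul_log (hy : |y| < 1) (hz : |z| < 1) :
    HasSum (fun p : {p : ℕ+ × ℕ+ // Nat.Coprime p.1 p.2} =>
        (1 / (p.1.2 : ℝ)) * log (1 - y ^ (p.1.1 : ℕ) * z ^ (p.1.2 : ℕ)))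
      (y / (1 - y) * log (1 - z)) := by
  have hdouble := PNat.coprimeMulEquiv.hasSum_iff.mpr (hasSum_pnat_prod_pow_mul_pow_div hy hz)
  have h := hdouble.prod_fiberwise fun p => hasSum_pnat_pow_mul_mul_pow_mul_div hy hz p.1.1 p.1.2
  simpa [neg_div, div_eq_inv_mul] using h.neg

theorem hasProd_coprime_rpow_inv (hy : |y| < 1) (hz : |z| < 1) :
    HasProd (fun p : {p : ℕ+ × ℕ+ // Nat.Coprime p.1 p.2} =>
        (1 - y ^ (p.1.1 : ℕ) * z ^ (p.1.2 : ℕ)) ^ ((1 : ℝ) / (p.1.2 : ℝ)))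
      ((1 - z) ^ (y / (1 - y))) := by
  have hpos : ∀ p : {p : ℕ+ × ℕ+ // Nat.Coprime p.1 p.2},
      0 < 1 - y ^ (p.1.1 : ℕ) * z ^ (p.1.2 : ℕ) :=
    fun p => sub_pos.mpr (abs_lt.mp (abs_pow_mul_pow_lt_one hy.le hz _ p.1.2.ne_zero)).2
  have hz' : 0 < 1 - z := sub_pos.mpr (abs_lt.mp hz).2
  convert (hasSum_coprime_inv_mul_log hy hz).rexp using 1
  · ext p
    rw [Function.comp_apply, rpow_def_of_pos (hpos p), mul_comm]
  · rw [rpow_def_of_pos hz', mul_comm]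

end Series

theorem stmt_5 (y z : ℝ) (hy0 : 0 ≤ y) (hy1 : y < 1) (hz0 : 0 ≤ z) (hz1 : z < 1) :
    (∑' p : {p : ℕ+ × ℕ+ // Nat.gcd (p.1 : ℕ) (p.2 : ℕ) = 1},
        (1 / (p.val.2 : ℝ)) * Real.log (1 - y ^ (p.val.1 : ℕ) * z ^ (p.val.2 : ℕ)) =
      y / (1 - y) * Real.log (1 - z)) ∧
    (∏' p : {p : ℕ+ × ℕ+ // Nat.gcd (p.1 : ℕ) (p.2 : ℕ) = 1},
        (1 - y ^ (p.val.1 : ℕ) * z ^ (p.val.2 : ℕ)) ^ ((1 : ℝ) / (p.val.2 : ℝ)) =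
      (1 - z) ^ (y / (1 - y))) := by
  have hy : |y| < 1 := abs_lt.mpr ⟨by linarith, hy1⟩
  have hz : |z| < 1 := abs_lt.mpr ⟨by linarith, hz1⟩
  exact ⟨(hasSum_coprime_inv_mul_log hy hz).tsum_eq, (hasProd_coprime_rpow_inv hy hz).tprod_eq⟩
end

section
/- For real z with 0 ≤ z < 1: ∏_{k=1}^∞ (1 - z^k)^{φ(k)/k} = exp(z/(z-1)), where φ is the Euler totient function. Equivalently, ∑_{k=1}^∞ (φ(k)/k) · log(1 - z^k) = z/(z-1) = -z/(1-z). -/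
/-!
Expanding `-log (1 - z ^ k) = ∑ₙ z ^ (k n) / n` turns `∑ₖ φ(k)/k · (-log (1 - z ^ k))` into a
double series of nonnegative terms `φ(k) z ^ (k n) / (k n)`. Grouping the terms by `m = k n`
and using `∑_{d ∣ m} φ(d) = m` leaves the geometric series `∑_{m ≥ 1} z ^ m = z / (1 - z)`.
Exponentiating gives the product.
-/

open Real

lemma hasSum_pnat_pow_div_eq_neg_log_one_sub {x : ℝ} (hx : |x| < 1) :
    HasSum (fun n : ℕ+ => x ^ (n : ℕ) / n) (-log (1 - x)) := by
  rw [hasSum_pnat_iff_hasSum_succ (f := fun n : ℕ => x ^ n / n)]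
  exact_mod_cast hasSum_pow_div_log_of_abs_lt_one hx

lemma hasSum_pnat_geometric {z : ℝ} (hz : |z| < 1) :
    HasSum (fun n : ℕ+ => z ^ (n : ℕ)) (z / (1 - z)) := by
  have hz1 : 1 - z ≠ 0 := by linarith [le_abs_self z]
  rw [hasSum_pnat_iff, pow_zero, div_add_one hz1, add_sub_cancel, one_div]
  exact hasSum_geometric_of_abs_lt_one hz

section Lambert

variable {a : ℕ → ℝ} {z s : ℝ}

lemma sum_divisorsAntidiagonal_div_mul_pow_div (m : ℕ) :
    ∑ p ∈ m.divisorsAntidiagonal, a p.1 / p.1 * (z ^ (p.1 * p.2) / p.2) =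
      (∑ d ∈ m.divisors, a d) * z ^ m / m := by
  have hterm : ∀ p ∈ m.divisorsAntidiagonal,
      a p.1 / p.1 * (z ^ (p.1 * p.2) / p.2) = a p.1 * z ^ m / m := by
    intro p hp
    obtain ⟨hpm, -⟩ := Nat.mem_divisorsAntidiagonal.mp hp
    rw [div_mul_div_comm, ← Nat.cast_mul, hpm]
  rw [Finset.sum_congr rfl hterm, ← Finset.sum_div, ← Finset.sum_mul,
    Nat.sum_divisorsAntidiagonal fun d _ => a d]

theorem hasSum_div_mul_neg_log_one_sub_pow (ha : ∀ k, 0 ≤ a k) (hz0 : 0 ≤ z) (hz1 : z < 1)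
    (h : HasSum (fun m : ℕ+ => (∑ d ∈ (m : ℕ).divisors, a d) * z ^ (m : ℕ) / m) s) :
    HasSum (fun k : ℕ+ => a k / k * -log (1 - z ^ (k : ℕ))) s := by
  set g : ℕ+ × ℕ+ → ℝ := fun p => a p.1 / p.1 * (z ^ (p.1 * p.2 : ℕ) / p.2)
  have hg0 : ∀ p, 0 ≤ g p := fun p =>
    mul_nonneg (div_nonneg (ha _) (Nat.cast_nonneg _)) (by positivity)
  have hfiber : ∀ m : ℕ+, HasSum (fun x => g (sigmaAntidiagonalEquivProd ⟨m, x⟩))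
      ((∑ d ∈ (m : ℕ).divisors, a d) * z ^ (m : ℕ) / m) := by
    intro m
    rw [← sum_divisorsAntidiagonal_div_mul_pow_div]
    exact Finset.hasSum _ (fun p : ℕ × ℕ => a p.1 / p.1 * (z ^ (p.1 * p.2) / p.2))
  -- nonnegativity is what allows regrouping the double series along the fibres of `(k, n) ↦ k n`
  have hsum : HasSum g s := by
    rw [← sigmaAntidiagonalEquivProd.hasSum_iff]
    have hsumm : Summable (g ∘ sigmaAntidiagonalEquivProd) :=
      (summable_sigma_of_nonneg fun _ => hg0 _).2
        ⟨fun m => (hfiber m).summable, by simpa only [(hfiber _).tsum_eq] using h.summable⟩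
    rw [← (hsumm.hasSum.sigma hfiber).unique h]
    exact hsumm.hasSum
  refine hsum.prod_fiberwise fun k => ?_
  have hzk : |z ^ (k : ℕ)| < 1 := by
    rw [abs_of_nonneg (by positivity)]
    exact pow_lt_one₀ hz0 hz1 k.ne_zero
  simpa only [g, PNat.mul_coe, pow_mul] using
    (hasSum_pnat_pow_div_eq_neg_log_one_sub hzk).mul_left (a k / k)

end Lambert

theorem hasSum_totient_div_mul_log_one_sub_pow {z : ℝ} (hz0 : 0 ≤ z) (hz1 : z < 1) :
    HasSum (fun k : ℕ+ => (Nat.totient k : ℝ) / k * log (1 - z ^ (k : ℕ))) (z / (z - 1)) := by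
  have hgeom : HasSum (fun m : ℕ+ => (∑ d ∈ (m : ℕ).divisors, (Nat.totient d : ℝ)) *
      z ^ (m : ℕ) / m) (z / (1 - z)) := by
    have hm : ∀ m : ℕ+, (∑ d ∈ (m : ℕ).divisors, (Nat.totient d : ℝ)) * z ^ (m : ℕ) / m =
        z ^ (m : ℕ) := fun m => by
      rw [← Nat.cast_sum, Nat.sum_totient, mul_div_cancel_left₀ _ (by positivity)]
    simpa only [hm] using hasSum_pnat_geometric (abs_lt.mpr ⟨by linarith, hz1⟩)
  have h := (hasSum_div_mul_neg_log_one_sub_pow (fun _ => Nat.cast_nonneg _) hz0 hz1 hgeom).neg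
  rw [← div_neg, neg_sub] at h
  simpa only [mul_neg, neg_neg] using h

theorem stmt_7 (z : ℝ) (hz0 : 0 ≤ z) (hz1 : z < 1) :
    (∏' k : ℕ+, (1 - z ^ (k : ℕ)) ^ ((Nat.totient (k : ℕ) : ℝ) / (k : ℝ)) =
      Real.exp (z / (z - 1))) ∧
    (∑' k : ℕ+, (Nat.totient (k : ℕ) : ℝ) / (k : ℝ) * Real.log (1 - z ^ (k : ℕ)) =
      z / (z - 1)) := by
  have h := hasSum_totient_div_mul_log_one_sub_pow hz0 hz1
  refine ⟨?_, h.tsum_eq⟩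
  rw [← h.rexp.tprod_eq]
  congr 1
  funext k
  have hk : 0 < 1 - z ^ (k : ℕ) := sub_pos.mpr (pow_lt_one₀ hz0 hz1 k.ne_zero)
  rw [Function.comp_apply, rpow_def_of_pos hk, mul_comm]
end

section
/- For real z with 0 ≤ z < 1: ∏_{k=1}^∞ (1 + z^k)^{φ(k)/k} = exp(z/(1-z^2)). Equivalently, ∑_{k=1}^∞ (φ(k)/k) · log(1 + z^k) = z/(1-z^2). -/
/-!
Expanding `-log (1 - w) = ∑ₘ wᵐ/m` turns `∑_d φ(d)/d · (-log (1 - z^d))` into the double series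
`∑_{d,m ≥ 1} φ(d) z^{dm} / (dm)`, absolutely convergent for `|z| < 1`. Summed along the
antidiagonals `dm = n` it is `∑ₙ zⁿ = z/(1-z)`, because `∑_{d ∣ n} φ(d) = n`. As
`log (1 + w) = log (1 - w²) - log (1 - w)`, subtracting the identity at `z²` from the one at `z`
gives `∑_k φ(k)/k · log (1 + z^k) = z/(1-z) - z²/(1-z²) = z/(1-z²)`; exponentiate for the product.
-/

open Real

theorem Nat.sum_divisorsAntidiagonal_totient_div_mul_pow {K : Type*} [Field K] [CharZero K]
    (z : K) {n : ℕ} (hn : n ≠ 0) :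
    ∑ p ∈ n.divisorsAntidiagonal, (p.1.totient : K) / (p.1 * p.2 : ℕ) * z ^ (p.1 * p.2) =
      z ^ n := by
  have hterm : ∀ p ∈ n.divisorsAntidiagonal,
      (p.1.totient : K) / (p.1 * p.2 : ℕ) * z ^ (p.1 * p.2) = p.1.totient * (z ^ n / n) := by
    intro p hp
    rw [(Nat.mem_divisorsAntidiagonal.mp hp).1]
    ring
  rw [Finset.sum_congr rfl hterm, ← Finset.sum_mul,
    Nat.sum_divisorsAntidiagonal (fun d _ => (d.totient : K)), ← Nat.cast_sum, Nat.sum_totient]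
  field_simp

theorem abs_pow_lt_one {z : ℝ} (hz : |z| < 1) {n : ℕ} (hn : n ≠ 0) : |z ^ n| < 1 :=
  abs_pow z n ▸ pow_lt_one₀ (abs_nonneg z) hz hn

noncomputable def totientTerm (z : ℝ) (c : ℕ+ × ℕ+) : ℝ :=
  ((c.1 : ℕ).totient : ℝ) / (c.1 * c.2 : ℕ) * z ^ (c.1 * c.2 : ℕ)

theorem hasSum_totientTerm_antidiagonal (z : ℝ) (n : ℕ+) :
    HasSum (fun p : (n : ℕ).divisorsAntidiagonal =>
      totientTerm z (sigmaAntidiagonalEquivProd ⟨n, p⟩)) (z ^ (n : ℕ)) := by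
  convert hasSum_fintype _
  rw [← Nat.sum_divisorsAntidiagonal_totient_div_mul_pow z n.ne_zero, ← Finset.sum_attach]
  rfl

theorem abs_totientTerm (z : ℝ) (c : ℕ+ × ℕ+) : |totientTerm z c| = totientTerm |z| c := by
  simp [totientTerm, abs_mul, abs_div, abs_pow]

section

variable {z : ℝ}

theorem summable_totientTerm (hz : |z| < 1) : Summable (totientTerm z) := by
  refine .of_abs ?_
  simp only [abs_totientTerm]
  rw [← sigmaAntidiagonalEquivProd.summable_iff, summable_sigma_of_nonneg]
  · refine ⟨fun n => .of_finite, ?_⟩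
    simp only [Function.comp_apply, (hasSum_totientTerm_antidiagonal _ _).tsum_eq]
    exact summable_pnat_iff_summable_nat.mpr (summable_geometric_of_lt_one (abs_nonneg z) hz)
  · intro c
    simp only [Function.comp_apply, totientTerm]
    positivity

theorem hasSum_totientTerm (hz : |z| < 1) : HasSum (totientTerm z) (z / (1 - z)) := by
  have hgeom : HasSum (fun n : ℕ+ => z ^ (n : ℕ)) (z / (1 - z)) := by
    rw [hasSum_pnat_iff_hasSum_succ (f := (z ^ ·))]
    simpa [pow_succ', div_eq_mul_inv] using (hasSum_geometric_of_abs_lt_one hz).mul_left z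
  obtain ⟨a, ha⟩ := summable_totientTerm hz
  have hfibres := (sigmaAntidiagonalEquivProd.hasSum_iff.mpr ha).sigma
    (hasSum_totientTerm_antidiagonal z)
  rwa [hfibres.unique hgeom] at ha

theorem hasSum_totientTerm_row (hz : |z| < 1) (d : ℕ+) :
    HasSum (fun m => totientTerm z (d, m)) ((d : ℕ).totient / d * -log (1 - z ^ (d : ℕ))) := by
  rw [← Equiv.pnatEquivNat.symm.hasSum_iff]
  refine ((hasSum_pow_div_log_of_abs_lt_one (abs_pow_lt_one hz d.ne_zero)).mul_left
    ((d : ℕ).totient / d : ℝ)).congr_fun fun m => ?_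
  simp only [Function.comp_apply, Equiv.pnatEquivNat_symm_apply, totientTerm, Nat.succPNat_coe,
    Nat.succ_eq_add_one, ← pow_mul]
  push_cast
  field_simp

theorem hasSum_totient_div_mul_neg_log_one_sub (hz : |z| < 1) :
    HasSum (fun k : ℕ+ => ((k : ℕ).totient : ℝ) / k * -log (1 - z ^ (k : ℕ))) (z / (1 - z)) :=
  (hasSum_totientTerm hz).prod_fiberwise (hasSum_totientTerm_row hz)

theorem hasSum_totient_div_mul_log_one_add (hz : |z| < 1) :
    HasSum (fun k : ℕ+ => ((k : ℕ).totient : ℝ) / k * log (1 + z ^ (k : ℕ)))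
      (z / (1 - z ^ 2)) := by
  have hvalue : z / (1 - z) - z ^ 2 / (1 - z ^ 2) = z / (1 - z ^ 2) := by
    have h1 : 1 - z ≠ 0 := by linarith [(abs_lt.mp hz).2]
    have h2 : 1 - z ^ 2 ≠ 0 := by nlinarith [abs_lt.mp hz]
    field_simp
    ring
  rw [← hvalue]
  refine ((hasSum_totient_div_mul_neg_log_one_sub hz).sub
    (hasSum_totient_div_mul_neg_log_one_sub (abs_pow_lt_one hz two_ne_zero))).congr_fun
    fun k => ?_
  obtain ⟨hlow, hupp⟩ := abs_lt.mp (abs_pow_lt_one hz k.ne_zero)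
  have hfactor : 1 - (z ^ 2) ^ (k : ℕ) = (1 - z ^ (k : ℕ)) * (1 + z ^ (k : ℕ)) := by ring
  rw [hfactor, log_mul (by linarith) (by linarith)]
  ring

end

theorem stmt_8 (z : ℝ) (hz0 : 0 ≤ z) (hz1 : z < 1) :
    (∏' k : ℕ+, (1 + z ^ (k : ℕ)) ^ ((Nat.totient (k : ℕ) : ℝ) / (k : ℝ)) =
      Real.exp (z / (1 - z ^ 2))) ∧
    (∑' k : ℕ+, (Nat.totient (k : ℕ) : ℝ) / (k : ℝ) * Real.log (1 + z ^ (k : ℕ)) =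
      z / (1 - z ^ 2)) := by
  have hz : |z| < 1 := abs_lt.mpr ⟨by linarith, hz1⟩
  have hsum := hasSum_totient_div_mul_log_one_add hz
  refine ⟨?_, hsum.tsum_eq⟩
  refine (hsum.rexp.congr_fun fun k => ?_).tprod_eq
  have hpos : 0 < 1 + z ^ (k : ℕ) := by linarith [(abs_lt.mp (abs_pow_lt_one hz k.ne_zero)).1]
  rw [Function.comp_apply, rpow_def_of_pos hpos, mul_comm]
end

section
/- Let a, b, c be real numbers with a + b + c = 1 and let x, y, z be real with 0 ≤ x, y, z < 1. Then ∑_{(l,m,n): l,m,n ≥ 1, l ≤ n, m ≤ n, gcd(l,m,n)=1} (1/(l^a m^b n^c)) · log(1/(1 - x^l y^m z^n)) = ∑_{n=1}^∞ (∑_{l=1}^n x^l/l^a) · (∑_{m=1}^n y^m/m^b) · z^n/n^c. -/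
/-!
Put `F(l, m, n) = x^l y^m z^n / (l^a m^b n^c)`, an absolutely summable family on the lattice
points of the pyramid `l, m ≤ n`. Every such point is uniquely `k • s` with `k ≥ 1` and `s`
visible (`gcd s = 1`), and since `a + b + c = 1` the `k`-sum of `F(k • s)` is
`(l^a m^b n^c)⁻¹ ∑ₖ wᵏ/k = (l^a m^b n^c)⁻¹ log (1/(1 - w))` for `s = (l, m, n)` and
`w = x^l y^m z^n`. Summing `F` layer by layer in `n` instead gives the right-hand side.
-/

open Finset

namespace SquarePyramid

abbrev Point := {t : ℕ+ × ℕ+ × ℕ+ // t.1 ≤ t.2.2 ∧ t.2.1 ≤ t.2.2}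

abbrev VisiblePoint := {t : ℕ+ × ℕ+ × ℕ+ // t.1 ≤ t.2.2 ∧ t.2.1 ≤ t.2.2 ∧
    Nat.gcd (t.1 : ℕ) (Nat.gcd (t.2.1 : ℕ) (t.2.2 : ℕ)) = 1}

def equivSigmaLayer : Point ≃ Σ n : ℕ+, ↥(Icc 1 (n : ℕ) ×ˢ Icc 1 (n : ℕ)) where
  toFun t := ⟨t.1.2.2, (t.1.1, t.1.2.1), mem_product.2
    ⟨mem_Icc.2 ⟨t.1.1.pos, t.2.1⟩, mem_Icc.2 ⟨t.1.2.1.pos, t.2.2⟩⟩⟩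
  invFun p :=
    have hp := mem_product.1 p.2.2
    ⟨(⟨p.2.1.1, (mem_Icc.1 hp.1).1⟩, ⟨p.2.1.2, (mem_Icc.1 hp.2).1⟩, p.1),
      (mem_Icc.1 hp.1).2, (mem_Icc.1 hp.2).2⟩
  left_inv _ := rfl
  right_inv _ := rfl

theorem hasSum_layer_sum {α : Type*} [NonUnitalSemiring α] [TopologicalSpace α]
    [ContinuousAdd α] [RegularSpace α] {f g h : ℕ → α}
    (hs : Summable fun t : Point => f t.1.1 * (g t.1.2.1 * h t.1.2.2)) :
    HasSum (fun n : ℕ+ => (∑ l ∈ Icc 1 (n : ℕ), f l) * (∑ m ∈ Icc 1 (n : ℕ), g m) * h n)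
      (∑' t : Point, f t.1.1 * (g t.1.2.1 * h t.1.2.2)) := by
  rw [← equivSigmaLayer.symm.tsum_eq]
  refine (equivSigmaLayer.symm.summable_iff.2 hs).hasSum.sigma fun n => ?_
  have hlayer : (∑ l ∈ Icc 1 (n : ℕ), f l) * (∑ m ∈ Icc 1 (n : ℕ), g m) * h n =
      ∑ p ∈ Icc 1 (n : ℕ) ×ˢ Icc 1 (n : ℕ), f p.1 * (g p.2 * h n) := by
    simp_rw [sum_product, sum_mul_sum, sum_mul, mul_assoc]
  rw [hlayer]
  exact (Icc 1 (n : ℕ) ×ˢ Icc 1 (n : ℕ)).hasSum _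

def gcd3 (t : ℕ+ × ℕ+ × ℕ+) : ℕ := Nat.gcd t.1 (Nat.gcd t.2.1 t.2.2)

theorem gcd3_smul (k : ℕ+) (t : ℕ+ × ℕ+ × ℕ+) : gcd3 (k • t) = k * gcd3 t := by
  simp only [gcd3, Prod.smul_fst, Prod.smul_snd, smul_eq_mul, PNat.mul_coe, Nat.gcd_mul_left]

def smulPoint (p : VisiblePoint × ℕ+) : Point :=
  ⟨p.2 • p.1.1, mul_le_mul_right p.1.2.1 p.2, mul_le_mul_right p.1.2.2.1 p.2⟩

theorem smulPoint_injective : Function.Injective smulPoint := by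
  rintro ⟨s, k⟩ ⟨s', k'⟩ h
  have hks : k • s.1 = k' • s'.1 := congrArg Subtype.val h
  have hk : k = k' := PNat.coe_injective <| by
    have hgcd := congrArg gcd3 hks
    rwa [gcd3_smul, gcd3_smul, show gcd3 s.1 = 1 from s.2.2.2,
      show gcd3 s'.1 = 1 from s'.2.2.2, mul_one, mul_one] at hgcd
  subst hk
  refine Prod.ext (Subtype.ext ?_) rfl
  simpa only [Prod.ext_iff, Prod.smul_fst, Prod.smul_snd, smul_eq_mul, mul_right_inj] using hks

theorem smulPoint_surjective : Function.Surjective smulPoint := by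
  rintro ⟨⟨L, M, N⟩, hLN, hMN⟩
  set d := PNat.gcd L (PNat.gcd M N)
  obtain ⟨l, hL⟩ : d ∣ L := PNat.gcd_dvd_left _ _
  obtain ⟨m, hM⟩ : d ∣ M := (PNat.gcd_dvd_right _ _).trans (PNat.gcd_dvd_left _ _)
  obtain ⟨n, hN⟩ : d ∣ N := (PNat.gcd_dvd_right _ _).trans (PNat.gcd_dvd_right _ _)
  have hdt : (L, M, N) = d • (l, m, n) := by rw [hL, hM, hN]; rfl
  have hgcd : (d : ℕ) * gcd3 (l, m, n) = d := by
    rw [← gcd3_smul, ← hdt, gcd3, ← PNat.gcd_coe, ← PNat.gcd_coe]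
  rw [hL, hN] at hLN
  rw [hM, hN] at hMN
  exact ⟨(⟨(l, m, n), le_of_mul_le_mul_left' hLN, le_of_mul_le_mul_left' hMN,
    (mul_eq_left₀ d.ne_zero).1 hgcd⟩, d), Subtype.ext hdt.symm⟩

noncomputable def smulEquiv : VisiblePoint × ℕ+ ≃ Point :=
  Equiv.ofBijective smulPoint ⟨smulPoint_injective, smulPoint_surjective⟩

theorem summable_norm_pow_div_rpow (a : ℝ) {x : ℝ} (hx : |x| < 1) :
    Summable fun l : ℕ+ => ‖x ^ (l : ℕ) / (l : ℝ) ^ a‖ := by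
  have hgeom : Summable fun n : ℕ => (n : ℝ) ^ ⌈-a⌉₊ * |x| ^ n :=
    summable_pow_mul_geometric_of_norm_lt_one _ (by rwa [Real.norm_eq_abs, abs_abs])
  refine (hgeom.comp_injective PNat.coe_injective).of_nonneg_of_le (fun _ => norm_nonneg _)
    fun l => ?_
  have hl : (1 : ℝ) ≤ l := by exact_mod_cast l.pos
  calc ‖x ^ (l : ℕ) / (l : ℝ) ^ a‖ = (l : ℝ) ^ (-a) * |x| ^ (l : ℕ) := by
        rw [norm_div, norm_pow, Real.norm_eq_abs, Real.norm_of_nonneg (by positivity),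
          Real.rpow_neg (by positivity), div_eq_inv_mul]
    _ ≤ (l : ℝ) ^ ⌈-a⌉₊ * |x| ^ (l : ℕ) := by
        gcongr
        rw [← Real.rpow_natCast]
        exact Real.rpow_le_rpow_of_exponent_le hl (Nat.le_ceil _)

theorem hasSum_pow_div_log {w : ℝ} (hw : |w| < 1) :
    HasSum (fun k : ℕ+ => w ^ (k : ℕ) / k) (Real.log (1 / (1 - w))) := by
  rw [one_div, Real.log_inv]
  exact hasSum_pnat_iff_hasSum_succ (f := fun k : ℕ => w ^ k / k) |>.2
    (by simpa using Real.hasSum_pow_div_log_of_abs_lt_one hw)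

theorem abs_monomial_lt_one {x y z : ℝ} (hx : |x| ≤ 1) (hy : |y| ≤ 1) (hz : |z| < 1)
    (l m n : ℕ+) : |x ^ (l : ℕ) * y ^ (m : ℕ) * z ^ (n : ℕ)| < 1 := by
  rw [abs_mul, abs_mul, abs_pow, abs_pow, abs_pow]
  exact mul_lt_one_of_nonneg_of_lt_one_right
    (mul_le_one₀ (pow_le_one₀ (abs_nonneg x) hx) (by positivity) (pow_le_one₀ (abs_nonneg y) hy))
    (by positivity) (pow_lt_one₀ (abs_nonneg z) hz n.ne_zero)

noncomputable def weightedMonomial (a b c x y z : ℝ) (t : ℕ+ × ℕ+ × ℕ+) : ℝ :=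
  x ^ (t.1 : ℕ) / (t.1 : ℝ) ^ a *
    (y ^ (t.2.1 : ℕ) / (t.2.1 : ℝ) ^ b * (z ^ (t.2.2 : ℕ) / (t.2.2 : ℝ) ^ c))

theorem summable_weightedMonomial (a b c : ℝ) {x y z : ℝ} (hx : |x| < 1) (hy : |y| < 1)
    (hz : |z| < 1) : Summable (weightedMonomial a b c x y z) :=
  summable_mul_of_summable_norm (summable_norm_pow_div_rpow a hx)
    ((summable_norm_pow_div_rpow b hy).mul_norm (summable_norm_pow_div_rpow c hz))

theorem weightedMonomial_smul {a b c : ℝ} (x y z : ℝ) (habc : a + b + c = 1) (k : ℕ+)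
    (t : ℕ+ × ℕ+ × ℕ+) :
    weightedMonomial a b c x y z (k • t) =
      1 / ((t.1 : ℝ) ^ a * (t.2.1 : ℝ) ^ b * (t.2.2 : ℝ) ^ c) *
        ((x ^ (t.1 : ℕ) * y ^ (t.2.1 : ℕ) * z ^ (t.2.2 : ℕ)) ^ (k : ℕ) / k) := by
  have hk : (k : ℝ) ^ a * (k : ℝ) ^ b * (k : ℝ) ^ c = k := by
    rw [← Real.rpow_add (by positivity), ← Real.rpow_add (by positivity), habc, Real.rpow_one]
  simp only [weightedMonomial, Prod.smul_fst, Prod.smul_snd, smul_eq_mul, PNat.mul_coe,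
    Nat.cast_mul, Real.mul_rpow (Nat.cast_nonneg _) (Nat.cast_nonneg _), mul_pow, ← pow_mul]
  field_simp
  rw [hk]
  ring

theorem hasSum_weightedMonomial_smul {a b c x y z : ℝ} (habc : a + b + c = 1) (hx : |x| ≤ 1)
    (hy : |y| ≤ 1) (hz : |z| < 1) (t : ℕ+ × ℕ+ × ℕ+) :
    HasSum (fun k : ℕ+ => weightedMonomial a b c x y z (k • t))
      (1 / ((t.1 : ℝ) ^ a * (t.2.1 : ℝ) ^ b * (t.2.2 : ℝ) ^ c) *
        Real.log (1 / (1 - x ^ (t.1 : ℕ) * y ^ (t.2.1 : ℕ) * z ^ (t.2.2 : ℕ)))) := by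
  simp_rw [weightedMonomial_smul x y z habc]
  exact (hasSum_pow_div_log (abs_monomial_lt_one hx hy hz _ _ _)).mul_left _

end SquarePyramid

open SquarePyramid in
theorem stmt_11 (a b c x y z : ℝ) (habc : a + b + c = 1)
    (hx0 : 0 ≤ x) (hx1 : x < 1) (hy0 : 0 ≤ y) (hy1 : y < 1) (hz0 : 0 ≤ z) (hz1 : z < 1) :
    ∑' t : {t : ℕ+ × ℕ+ × ℕ+ // t.1 ≤ t.2.2 ∧ t.2.1 ≤ t.2.2 ∧
        Nat.gcd (t.1 : ℕ) (Nat.gcd (t.2.1 : ℕ) (t.2.2 : ℕ)) = 1},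
        (1 / ((t.val.1 : ℝ) ^ a * (t.val.2.1 : ℝ) ^ b * (t.val.2.2 : ℝ) ^ c)) *
          Real.log (1 / (1 - x ^ (t.val.1 : ℕ) * y ^ (t.val.2.1 : ℕ) * z ^ (t.val.2.2 : ℕ))) =
      ∑' n : ℕ+,
        (∑ l ∈ Finset.Icc 1 (n : ℕ), x ^ l / (l : ℝ) ^ a) *
          (∑ m ∈ Finset.Icc 1 (n : ℕ), y ^ m / (m : ℝ) ^ b) * (z ^ (n : ℕ) / (n : ℝ) ^ c) := by
  have hx : |x| < 1 := abs_lt.2 ⟨by linarith, hx1⟩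
  have hy : |y| < 1 := abs_lt.2 ⟨by linarith, hy1⟩
  have hz : |z| < 1 := abs_lt.2 ⟨by linarith, hz1⟩
  have hs : Summable fun t : Point => weightedMonomial a b c x y z t.1 :=
    (summable_weightedMonomial a b c hx hy hz).subtype _
  have hvisible := (smulEquiv.hasSum_iff.2 hs.hasSum).prod_fiberwise
    fun s => hasSum_weightedMonomial_smul habc hx.le hy.le hz s.1
  exact hvisible.tsum_eq.trans (hasSum_layer_sum (f := fun l : ℕ => x ^ l / (l : ℝ) ^ a)
    (g := fun m : ℕ => y ^ m / (m : ℝ) ^ b) (h := fun n : ℕ => z ^ n / (n : ℝ) ^ c) hs).tsum_eq.symm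
end

section
/- For real z with 0 ≤ z < 1: ∑_{(m,n): 1 ≤ m ≤ n, gcd(m,n)=1} (m/n^2) · log(1/(1 - z^n)) = (1/2)·log(1/(1-z)) + z/(2(1-z)). Equivalently, ∏_{1≤m≤n, gcd(m,n)=1} (1/(1-z^n))^{m/n^2} = (1-z)^{-1/2} · exp(z/(2(1-z))). -/
/-!
For fixed `n`, the residues `m ≤ n` coprime to `n` pair off as `m ↔ n - m`, so they sum to
`n φ(n) / 2` (to `1` when `n = 1`). Writing `L(n) = -log (1 - zⁿ)`, the sum is therefore
`L(1) / 2 + (1 / 2) ∑ φ(n) / n · L(n)`. Expanding `L(n) = ∑ₖ z^(nk) / k` and collecting the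
terms with `nk = N`, the identity `∑_{d ∣ N} φ(d) = N` turns this Lambert series into
`∑_{N ≥ 1} z^N = z / (1 - z)`. The product is the exponential of the sum.
-/

open Finset Real

theorem hasSum_sigma_of_nonneg {α : Type*} {β : α → Type*} {f : (Σ a, β a) → ℝ}
    (hf : ∀ x, 0 ≤ f x) {g : α → ℝ} {s : ℝ} (hfg : ∀ a, HasSum (fun b ↦ f ⟨a, b⟩) (g a))
    (hg : HasSum g s) : HasSum f s :=
  hg.sigma_of_hasSum hfg <| (summable_sigma_of_nonneg hf).2
    ⟨fun a ↦ (hfg a).summable, by simpa only [(hfg _).tsum_eq] using hg.summable⟩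

theorem hasSum_prod_of_nonneg {α β : Type*} {f : α × β → ℝ} (hf : 0 ≤ f) {g : α → ℝ} {s : ℝ}
    (hfg : ∀ a, HasSum (fun b ↦ f (a, b)) (g a)) (hg : HasSum g s) : HasSum f s :=
  (Equiv.sigmaEquivProd α β).hasSum_iff.1 <| hasSum_sigma_of_nonneg (fun _ ↦ hf _) hfg hg

theorem Nat.two_mul_sum_coprime_eq_mul_totient {n : ℕ} (hn : n ≠ 1) :
    2 * ∑ m ∈ range n with n.Coprime m, m = n * n.totient := by
  set T := {m ∈ range n | n.Coprime m}
  have hT : ∀ m ∈ T, 0 < m ∧ m < n := fun m hm ↦ by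
    obtain ⟨hmn, hcop⟩ := by simpa [T] using hm
    exact ⟨Nat.pos_of_ne_zero fun h ↦ hn (by simpa [h] using hcop), hmn⟩
  have hreflect : ∀ m ∈ T, n - m ∈ T := fun m hm ↦ by
    obtain ⟨hmn, hcop⟩ := by simpa [T] using hm
    simpa [T, (hT m hm).1, hmn.pos] using (Nat.coprime_self_sub_right hmn.le).2 hcop
  have hsym : ∑ m ∈ T, m = ∑ m ∈ T, (n - m) :=
    sum_nbij' (n - ·) (n - ·) hreflect hreflect (fun m hm ↦ by have := hT m hm; omega)
      (fun m hm ↦ by have := hT m hm; omega) (fun m hm ↦ by have := hT m hm; omega)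
  calc 2 * ∑ m ∈ T, m = ∑ m ∈ T, (m + (n - m)) := by rw [two_mul, sum_add_distrib, ← hsym]
    _ = ∑ _m ∈ T, n := sum_congr rfl fun m hm ↦ by have := hT m hm; omega
    _ = n * n.totient := by rw [sum_const, smul_eq_mul, mul_comm, Nat.totient_eq_card_coprime]

theorem Nat.two_mul_sum_range_succ_coprime (n : ℕ) :
    2 * ∑ m ∈ range (n + 1) with m.Coprime n, m = n * n.totient + if n = 1 then 1 else 0 := by
  rcases eq_or_ne n 1 with rfl | hn
  · decide
  have hself : ¬ n.Coprime n := by rwa [Nat.coprime_self]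
  rw [range_add_one, filter_insert, if_neg hself, if_neg hn, add_zero,
    ← Nat.two_mul_sum_coprime_eq_mul_totient hn]
  simp only [Nat.coprime_comm]

theorem hasSum_ite_coprime_le_div_sq (a : ℝ) (n : ℕ) :
    HasSum (fun m : ℕ ↦ if m ≤ n ∧ m.Coprime n then (m : ℝ) / n ^ 2 * a else 0)
      (((n.totient : ℝ) / n + if n = 1 then 1 else 0) / 2 * a) := by
  convert hasSum_sum_of_ne_finset_zero (L := SummationFilter.unconditional ℕ)
    (s := range (n + 1)) fun m hm ↦ ?_ using 1
  · have hsum : (∑ m ∈ range (n + 1) with m.Coprime n, m : ℝ) =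
        (n * n.totient + if n = 1 then 1 else 0) / 2 := by
      have h := congrArg (Nat.cast : ℕ → ℝ) (Nat.two_mul_sum_range_succ_coprime n)
      push_cast at h
      linarith
    have hfilter : {m ∈ range (n + 1) | m ≤ n ∧ m.Coprime n} = {m ∈ range (n + 1) | m.Coprime n} :=
      filter_congr fun m hm ↦ by simp [Nat.lt_succ_iff.1 (mem_range.1 hm)]
    rw [← sum_filter, hfilter, ← sum_mul, ← sum_div, hsum]
    rcases Nat.lt_trichotomy n 1 with hn | rfl | hn
    · obtain rfl : n = 0 := by omega
      simp
    · norm_num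
    · rw [if_neg hn.ne']
      field_simp
      ring
  · rw [mem_range] at hm
    rw [if_neg (by omega)]

section

variable {z : ℝ}

theorem hasSum_totient_mul_pow_div_pnat (hz : |z| < 1) (d : ℕ+) :
    HasSum (fun k : ℕ+ ↦ ((d : ℕ).totient : ℝ) * z ^ ((d : ℕ) * k) / ((d : ℕ) * k : ℕ))
      ((d : ℕ).totient / d * -log (1 - z ^ (d : ℕ))) := by
  have hzd : |z ^ (d : ℕ)| < 1 := by rw [abs_pow]; exact pow_lt_one₀ (abs_nonneg z) hz d.ne_zero
  rw [hasSum_pnat_iff_hasSum_succ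
    (f := fun k ↦ ((d : ℕ).totient : ℝ) * z ^ ((d : ℕ) * k) / ((d : ℕ) * k : ℕ))]
  refine ((hasSum_pow_div_log_of_abs_lt_one hzd).mul_left ((d : ℕ).totient / d : ℝ)).congr_fun
    fun k ↦ ?_
  rw [← pow_mul]
  push_cast
  field_simp

theorem hasSum_geometric_pnat (hz : |z| < 1) :
    HasSum (fun n : ℕ+ ↦ z ^ (n : ℕ)) (z / (1 - z)) := by
  have hne : 1 - z ≠ 0 := (sub_pos.2 (abs_lt.1 hz).2).ne'
  have h : z / (1 - z) + z ^ 0 = (1 - z)⁻¹ := by field_simp; ring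
  refine hasSum_pnat_iff.2 ?_
  rw [h]
  exact hasSum_geometric_of_abs_lt_one hz

theorem hasSum_totient_mul_pow_div_prod (hz0 : 0 ≤ z) (hz1 : z < 1) :
    HasSum (fun p : ℕ+ × ℕ+ ↦
        ((p.1 : ℕ).totient : ℝ) * z ^ ((p.1 : ℕ) * p.2) / ((p.1 : ℕ) * p.2 : ℕ)) (z / (1 - z)) := by
  rw [← sigmaAntidiagonalEquivProd.hasSum_iff]
  refine hasSum_sigma_of_nonneg (fun _ ↦ by dsimp; positivity) (fun N ↦ ?_)
    (hasSum_geometric_pnat (abs_lt.2 ⟨by linarith, hz1⟩))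
  have hfiber : ∑ x ∈ (N : ℕ).divisorsAntidiagonal,
      (x.1.totient : ℝ) * z ^ (x.1 * x.2) / (x.1 * x.2 : ℕ) = z ^ (N : ℕ) :=
    calc _ = ∑ x ∈ (N : ℕ).divisorsAntidiagonal, (x.1.totient : ℝ) * (z ^ (N : ℕ) / N) :=
          sum_congr rfl fun x hx ↦ by rw [(Nat.mem_divisorsAntidiagonal.1 hx).1, mul_div_assoc]
      _ = (∑ x ∈ (N : ℕ).divisorsAntidiagonal, x.1.totient : ℕ) * (z ^ (N : ℕ) / N) := by
          rw [Nat.cast_sum, sum_mul]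
      _ = z ^ (N : ℕ) := by
          rw [Nat.sum_divisorsAntidiagonal (fun a _ ↦ a.totient), Nat.sum_totient]
          field_simp
  rw [← hfiber]
  exact (N : ℕ).divisorsAntidiagonal.hasSum _

theorem hasSum_totient_div_mul_neg_log (hz0 : 0 ≤ z) (hz1 : z < 1) :
    HasSum (fun n : ℕ ↦ (n.totient : ℝ) / n * -log (1 - z ^ n)) (z / (1 - z)) := by
  have hz : |z| < 1 := abs_lt.2 ⟨by linarith, hz1⟩
  have h : HasSum (fun d : ℕ+ ↦ ((d : ℕ).totient : ℝ) / d * -log (1 - z ^ (d : ℕ)))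
      (z / (1 - z)) :=
    (hasSum_totient_mul_pow_div_prod hz0 hz1).prod_fiberwise (hasSum_totient_mul_pow_div_pnat hz)
  simpa using hasSum_pnat_iff (f := fun n : ℕ ↦ (n.totient : ℝ) / n * -log (1 - z ^ n)) |>.1 h

theorem hasSum_ite_coprime_le_div_sq_mul_neg_log (hz0 : 0 ≤ z) (hz1 : z < 1) :
    HasSum (fun q : ℕ × ℕ ↦ if q.2 ≤ q.1 ∧ q.2.Coprime q.1 then
        (q.2 : ℝ) / q.1 ^ 2 * -log (1 - z ^ q.1) else 0)
      ((z / (1 - z) - log (1 - z)) / 2) := by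
  refine hasSum_prod_of_nonneg
    (g := fun n : ℕ ↦ ((n.totient : ℝ) / n + if n = 1 then 1 else 0) / 2 * -log (1 - z ^ n))
    (fun q ↦ ?_) (fun n ↦ hasSum_ite_coprime_le_div_sq _ n) ?_
  · have : 0 ≤ -log (1 - z ^ q.1) := neg_nonneg.2 <|
      log_nonpos (sub_nonneg.2 (pow_le_one₀ hz0 hz1.le)) (sub_le_self _ (pow_nonneg hz0 _))
    dsimp only
    split_ifs <;> positivity
  · rw [sub_eq_add_neg]
    refine (((hasSum_totient_div_mul_neg_log hz0 hz1).add
      (hasSum_ite_eq 1 (-log (1 - z)))).div_const 2).congr_fun fun n ↦ ?_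
    split_ifs with hn
    · subst hn
      norm_num
    · ring

theorem hasSum_coprime_pairs_div_sq_mul_log (hz0 : 0 ≤ z) (hz1 : z < 1) :
    HasSum (fun p : {p : ℕ+ × ℕ+ // p.1 ≤ p.2 ∧ Nat.gcd (p.1 : ℕ) (p.2 : ℕ) = 1} ↦
        ((p.val.1 : ℝ) / (p.val.2 : ℝ) ^ 2) * log (1 / (1 - z ^ (p.val.2 : ℕ))))
      (1 / 2 * log (1 / (1 - z)) + z / (2 * (1 - z))) := by
  let g (p : {p : ℕ+ × ℕ+ // p.1 ≤ p.2 ∧ Nat.gcd (p.1 : ℕ) (p.2 : ℕ) = 1}) : ℕ × ℕ :=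
    ((p.val.2 : ℕ), (p.val.1 : ℕ))
  have hg : Function.Injective g := fun p q h ↦ by
    simp only [g, Prod.mk.injEq, PNat.coe_inj] at h
    exact Subtype.ext (Prod.ext h.2 h.1)
  -- pairs `(n, 0)` lie outside the image of `g`, but their terms vanish
  have hrange : ∀ q ∉ Set.range g, (if q.2 ≤ q.1 ∧ q.2.Coprime q.1 then
      (q.2 : ℝ) / q.1 ^ 2 * -log (1 - z ^ q.1) else 0) = 0 := by
    rintro ⟨n, m⟩ hq
    split_ifs with hmn
    · obtain rfl | hm := eq_or_ne m 0
      · simp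
      · exact (hq ⟨⟨(⟨m, Nat.pos_of_ne_zero hm⟩, ⟨n, by omega⟩), hmn⟩, rfl⟩).elim
    · rfl
  rw [show 1 / 2 * log (1 / (1 - z)) + z / (2 * (1 - z)) = (z / (1 - z) - log (1 - z)) / 2 by
    rw [one_div (1 - z), log_inv, mul_comm 2, ← div_div]; ring]
  refine ((hg.hasSum_iff hrange).2 (hasSum_ite_coprime_le_div_sq_mul_neg_log hz0 hz1)).congr_fun
    fun p ↦ ?_
  simp only [g, Function.comp_apply]
  rw [if_pos ⟨PNat.coe_le_coe _ _ |>.2 p.2.1, p.2.2⟩, one_div (1 - _), log_inv]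

end

theorem stmt_16 (z : ℝ) (hz0 : 0 ≤ z) (hz1 : z < 1) :
    (∑' p : {p : ℕ+ × ℕ+ // p.1 ≤ p.2 ∧ Nat.gcd (p.1 : ℕ) (p.2 : ℕ) = 1},
        ((p.val.1 : ℝ) / (p.val.2 : ℝ) ^ 2) * Real.log (1 / (1 - z ^ (p.val.2 : ℕ))) =
      1 / 2 * Real.log (1 / (1 - z)) + z / (2 * (1 - z))) ∧
    (∏' p : {p : ℕ+ × ℕ+ // p.1 ≤ p.2 ∧ Nat.gcd (p.1 : ℕ) (p.2 : ℕ) = 1},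
        (1 / (1 - z ^ (p.val.2 : ℕ))) ^ ((p.val.1 : ℝ) / (p.val.2 : ℝ) ^ 2) =
      (1 - z) ^ (-(1 / 2) : ℝ) * Real.exp (z / (2 * (1 - z)))) := by
  have h := hasSum_coprime_pairs_div_sq_mul_log hz0 hz1
  refine ⟨h.tsum_eq, ?_⟩
  calc _ = ∏' p : {p : ℕ+ × ℕ+ // p.1 ≤ p.2 ∧ Nat.gcd (p.1 : ℕ) (p.2 : ℕ) = 1},
        exp ((p.val.1 : ℝ) / (p.val.2 : ℝ) ^ 2 * log (1 / (1 - z ^ (p.val.2 : ℕ)))) :=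
        tprod_congr fun p ↦ by
          have : 0 < 1 - z ^ (p.val.2 : ℕ) := sub_pos.2 (pow_lt_one₀ hz0 hz1 p.val.2.ne_zero)
          rw [rpow_def_of_pos (by positivity), mul_comm]
    _ = exp (1 / 2 * log (1 / (1 - z)) + z / (2 * (1 - z))) := h.rexp.tprod_eq
    _ = _ := by
        rw [exp_add, rpow_def_of_pos (sub_pos.2 hz1), one_div (1 - z), log_inv]
        ring_nf
end

section
/- As formal power series in two variables y and z (or for real |y|, |z| < 1): ∏_{m,n ≥ 0} (1 + y^{2^m} z^{2^n}) = (1/(1 - yz)) · ∏_{k ≥ 1} 1/((1 - y^{2^k} z)(1 - y z^{2^k})). Combinatorially: the number of partitions of the vector ⟨m,n⟩ into distinct parts of the form ⟨2^a, 2^b⟩ (a,b ≥ 0) equals the number of partitions of ⟨m,n⟩ into unrestricted parts of the form ⟨1, 2^b⟩ or ⟨2^a, 1⟩. -/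
/-!
Group the factors along the diagonals `m - n = d`. On the diagonal `d` the factors are
`1 + w ^ 2 ^ j` with `w = y ^ 2 ^ d⁺ * z ^ 2 ^ d⁻`, and by the telescoping identity
`(1 - w) ∏_{j < N} (1 + w ^ 2 ^ j) = 1 - w ^ 2 ^ N` their product is `(1 - w)⁻¹`.
The diagonal `d = 0` gives `(1 - y z)⁻¹`, and the diagonals `±k` pair up into the factor
indexed by `k : ℕ+`.
-/

open Filter Topology

theorem tprod_int_eq_mul_tprod_pnat_mul_neg {M : Type*} [CommMonoid M] [TopologicalSpace M]
    [ContinuousMul M] [T2Space M] {f : ℤ → M} (h₁ : Multipliable fun n : ℕ+ ↦ f n)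
    (h₂ : Multipliable fun n : ℕ+ ↦ f (-n)) :
    ∏' n, f n = f 0 * ∏' n : ℕ+, f n * f (-n) := by
  have h₁' : Multipliable fun n : ℕ ↦ f (n + 1) := by
    exact_mod_cast multipliable_pnat_iff_multipliable_succ (f := fun n : ℕ ↦ f n) |>.1 h₁
  have h₂' : Multipliable fun n : ℕ ↦ f (-(n + 1)) := by
    exact_mod_cast multipliable_pnat_iff_multipliable_succ (f := fun n : ℕ ↦ f (-n)) |>.1 h₂
  rw [tprod_of_add_one_of_neg_add_one h₁' h₂', h₁.tprod_mul h₂,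
    tprod_pnat_eq_tprod_succ (f := fun n : ℕ ↦ f n),
    tprod_pnat_eq_tprod_succ (f := fun n : ℕ ↦ f (-n))]
  push_cast
  ac_rfl

theorem summable_pow_two_pow {r : ℝ} (h₀ : 0 ≤ r) (h₁ : r < 1) :
    Summable fun j : ℕ ↦ r ^ 2 ^ j :=
  (summable_geometric_of_lt_one h₀ h₁).of_nonneg_of_le (fun _ ↦ by positivity)
    fun _ ↦ pow_le_pow_of_le_one h₀ h₁.le Nat.lt_two_pow_self.le

theorem mul_prod_range_one_add_pow_two_pow {R : Type*} [CommRing R] (w : R) (N : ℕ) :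
    (1 - w) * ∏ j ∈ Finset.range N, (1 + w ^ 2 ^ j) = 1 - w ^ 2 ^ N := by
  induction N with
  | zero => simp
  | succ N ih =>
    rw [Finset.prod_range_succ, ← mul_assoc, ih, pow_succ, pow_mul]
    ring

/-- `(d, j)` is the `j`-th point of the diagonal `m - n = d`. -/
def diagonalEquiv : ℤ × ℕ ≃ ℕ × ℕ where
  toFun q := (q.1.toNat + q.2, (-q.1).toNat + q.2)
  invFun p := (p.1 - p.2, min p.1 p.2)
  left_inv := by rintro ⟨d, j⟩; simp only [Prod.mk.injEq]; omega
  right_inv := by rintro ⟨m, n⟩; simp only [Prod.mk.injEq]; omega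

def dyadicDiagonal {M : Type*} [Monoid M] (y z : M) (d : ℤ) : M :=
  y ^ 2 ^ d.toNat * z ^ 2 ^ (-d).toNat

section CommMonoid

variable {M : Type*} [CommMonoid M] (y z : M)

theorem dyadicDiagonal_pow_two_pow (d : ℤ) (j : ℕ) :
    dyadicDiagonal y z d ^ 2 ^ j =
      y ^ 2 ^ (diagonalEquiv (d, j)).1 * z ^ 2 ^ (diagonalEquiv (d, j)).2 := by
  simp only [dyadicDiagonal, diagonalEquiv, Equiv.coe_fn_mk, mul_pow, ← pow_mul, ← pow_add]

theorem dyadicDiagonal_zero : dyadicDiagonal y z 0 = y * z := by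
  simp [dyadicDiagonal]

theorem dyadicDiagonal_natCast (n : ℕ) : dyadicDiagonal y z n = y ^ 2 ^ n * z := by
  simp [dyadicDiagonal]

theorem dyadicDiagonal_neg_natCast (n : ℕ) : dyadicDiagonal y z (-n) = y * z ^ 2 ^ n := by
  simp [dyadicDiagonal]

end CommMonoid

section NormedField

variable {𝕜 : Type*} [NormedField 𝕜] {y z : 𝕜}

theorem norm_dyadicDiagonal_lt_one (hy : ‖y‖ < 1) (hz : ‖z‖ < 1) (d : ℤ) :
    ‖dyadicDiagonal y z d‖ < 1 := by
  rw [dyadicDiagonal, norm_mul, norm_pow, norm_pow]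
  exact mul_lt_one_of_nonneg_of_lt_one_left (by positivity)
    (pow_lt_one₀ (norm_nonneg y) hy (by positivity)) (pow_le_one₀ (norm_nonneg z) hz.le)

variable [CompleteSpace 𝕜]

theorem hasProd_one_add_pow_two_pow {w : 𝕜} (hw : ‖w‖ < 1) :
    HasProd (fun j : ℕ ↦ 1 + w ^ 2 ^ j) (1 - w)⁻¹ := by
  have hm : Multipliable fun j : ℕ ↦ 1 + w ^ 2 ^ j :=
    multipliable_one_add_of_summable <| by
      simpa only [norm_pow] using summable_pow_two_pow (norm_nonneg w) hw
  have hw₁ : 1 - w ≠ 0 := sub_ne_zero.2 (by rintro rfl; simp at hw)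
  have hlim : Tendsto (fun N : ℕ ↦ (1 - w)⁻¹ * (1 - w ^ 2 ^ N)) atTop
      (𝓝 ((1 - w)⁻¹ * (1 - 0))) :=
    ((tendsto_pow_atTop_nhds_zero_of_norm_lt_one hw).comp
      (tendsto_pow_atTop_atTop_of_one_lt one_lt_two)).const_sub 1 |>.const_mul _
  rw [sub_zero, mul_one] at hlim
  rw [hm.hasProd_iff_tendsto_nat]
  refine hlim.congr fun N ↦ ?_
  rw [← mul_prod_range_one_add_pow_two_pow, inv_mul_cancel_left₀ hw₁]

theorem multipliable_inv_one_sub {ι : Type*} {f : ι → 𝕜} (hf : Summable fun i ↦ ‖f i‖)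
    (h₁ : ∀ i, f i ≠ 1) : Multipliable fun i ↦ (1 - f i)⁻¹ := by
  have hsum : Summable fun i ↦ ‖f i * (1 - f i)⁻¹‖ := by
    refine Summable.of_norm_bounded_eventually (hf.mul_left 2) ?_
    filter_upwards [hf.tendsto_cofinite_zero.eventually_le_const one_half_pos] with i hi
    have hhalf : 1 / 2 ≤ ‖1 - f i‖ := by
      have := norm_sub_norm_le (1 : 𝕜) (f i)
      rw [norm_one] at this
      linarith
    rw [norm_norm, norm_mul, norm_inv, ← div_eq_mul_inv, div_le_iff₀ (by linarith)]
    nlinarith [norm_nonneg (f i)]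
  convert multipliable_one_add_of_summable hsum using 2 with i
  have : 1 - f i ≠ 0 := sub_ne_zero.2 (h₁ i).symm
  field_simp
  ring

theorem multipliable_inv_one_sub_pow_two_pow_mul (hy : ‖y‖ < 1) (hz : ‖z‖ ≤ 1) :
    Multipliable fun k : ℕ+ ↦ (1 - y ^ 2 ^ (k : ℕ) * z)⁻¹ := by
  have hle : ∀ k : ℕ+, ‖y ^ 2 ^ (k : ℕ) * z‖ ≤ ‖y‖ ^ 2 ^ (k : ℕ) := fun k ↦ by
    rw [norm_mul, norm_pow]
    exact mul_le_of_le_one_right (by positivity) hz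
  refine multipliable_inv_one_sub ?_ fun k h ↦ ?_
  · exact ((summable_pow_two_pow (norm_nonneg y) hy).comp_injective
      PNat.coe_injective).of_nonneg_of_le (fun _ ↦ norm_nonneg _) hle
  · have := (hle k).trans_lt (pow_lt_one₀ (norm_nonneg y) hy (by positivity))
    simp [h] at this

theorem hasProd_inv_one_sub_dyadicDiagonal (hy : ‖y‖ < 1) (hz : ‖z‖ < 1) :
    HasProd (fun d : ℤ ↦ (1 - dyadicDiagonal y z d)⁻¹)
      (∏' p : ℕ × ℕ, (1 + y ^ 2 ^ p.1 * z ^ 2 ^ p.2)) := by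
  have hsum : Summable fun p : ℕ × ℕ ↦ ‖y ^ 2 ^ p.1 * z ^ 2 ^ p.2‖ := by
    simpa only [norm_mul, norm_pow] using
      (summable_pow_two_pow (norm_nonneg y) hy).mul_of_nonneg
        (summable_pow_two_pow (norm_nonneg z) hz) (fun _ ↦ by positivity) fun _ ↦ by positivity
  refine (diagonalEquiv.hasProd_iff.2 (multipliable_one_add_of_summable hsum).hasProd)
    |>.prod_fiberwise fun d ↦ ?_
  simpa only [Function.comp_def, dyadicDiagonal_pow_two_pow] using
    hasProd_one_add_pow_two_pow (norm_dyadicDiagonal_lt_one hy hz d)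

theorem tprod_one_add_pow_two_pow_mul_pow_two_pow (hy : ‖y‖ < 1) (hz : ‖z‖ < 1) :
    ∏' p : ℕ × ℕ, (1 + y ^ 2 ^ p.1 * z ^ 2 ^ p.2) =
      (1 - y * z)⁻¹ * ∏' k : ℕ+, ((1 - y ^ 2 ^ (k : ℕ) * z) * (1 - y * z ^ 2 ^ (k : ℕ)))⁻¹ := by
  have h₁ : Multipliable fun k : ℕ+ ↦ (1 - dyadicDiagonal y z k)⁻¹ := by
    simpa only [dyadicDiagonal_natCast] using multipliable_inv_one_sub_pow_two_pow_mul hy hz.le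
  have h₂ : Multipliable fun k : ℕ+ ↦ (1 - dyadicDiagonal y z (-k))⁻¹ := by
    simpa only [dyadicDiagonal_neg_natCast, mul_comm y] using
      multipliable_inv_one_sub_pow_two_pow_mul hz hy.le
  rw [← (hasProd_inv_one_sub_dyadicDiagonal hy hz).tprod_eq,
    tprod_int_eq_mul_tprod_pnat_mul_neg (f := fun d ↦ (1 - dyadicDiagonal y z d)⁻¹) h₁ h₂]
  simp only [dyadicDiagonal_zero, dyadicDiagonal_natCast, dyadicDiagonal_neg_natCast, mul_inv]

end NormedField

theorem stmt_18 (y z : ℝ) (hy : |y| < 1) (hz : |z| < 1) :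
    ∏' p : ℕ × ℕ, (1 + y ^ 2 ^ p.1 * z ^ 2 ^ p.2) =
      (1 / (1 - y * z)) *
        ∏' k : ℕ+, 1 / ((1 - y ^ 2 ^ (k : ℕ) * z) * (1 - y * z ^ 2 ^ (k : ℕ))) := by
  simp only [one_div]
  exact tprod_one_add_pow_two_pow_mul_pow_two_pow (y := y) (z := z) hy hz
end
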